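/- Let l ≥ 1, q ≥ 1, p ≥ l+1, and let ψ : 𝕊^l → ℝ^q be a C¹ map. Define ψ̄ : ℝ^{l+1}∖{0} → ℝ^q by ψ̄(x) = ψ(x/‖x‖). If ∫_{B_1(0)} ‖Dψ̄(x)‖^p dx < ∞, then ψ (and hence ψ̄) is constant. -/

import Mathlib

/-!
Zero-homogeneity of `ψ̄` makes `Dψ̄` homogeneous of degree `-1`. If `Dψ̄(u) ≠ 0` at a unit
vector `u`, continuity gives `|Dψ̄| ≥ ε` on a ball `B(u, δ)`, hence `|Dψ̄| ≥ ε / r` on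
`B(r u, r δ)`, whose share of the `p`-energy is at least `ε^p r^(n - p) |B(0, δ)| ≥ ε^p |B(0, δ)|`
because `p ≥ n = l + 1`. The balls with `r = 2^(-k-1)` are disjoint and lie in `B(0, 1)`, so the
energy would be infinite. Thus `Dψ̄ = 0` on `ℝⁿ ∖ {0}`, which is connected since `n ≥ 2`.
-/

open scoped Manifold
open MeasureTheory

/-- The Hilbert–Schmidt norm of a continuous linear map between Euclidean spaces,
computed via the standard orthonormal basis. -/
noncomputable def hsNorm {n q : ℕ}
    (T : EuclideanSpace ℝ (Fin n) →L[ℝ] EuclideanSpace ℝ (Fin q)) : ℝ :=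
  Real.sqrt (∑ i, ‖T (EuclideanSpace.single i 1)‖ ^ 2)

open scoped ENNReal ContDiff
open Metric Module Function

section HilbertSchmidt

variable {n q : ℕ}

theorem hsNorm_smul (c : ℝ) (T : EuclideanSpace ℝ (Fin n) →L[ℝ] EuclideanSpace ℝ (Fin q)) :
    hsNorm (c • T) = |c| * hsNorm T := by
  simp only [hsNorm, smul_apply, norm_smul, mul_pow, Real.norm_eq_abs, sq_abs, ← Finset.mul_sum]
  rw [Real.sqrt_mul (sq_nonneg c), Real.sqrt_sq_eq_abs]

theorem hsNorm_pos {T : EuclideanSpace ℝ (Fin n) →L[ℝ] EuclideanSpace ℝ (Fin q)} (hT : T ≠ 0) :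
    0 < hsNorm T := by
  obtain ⟨i, hi⟩ : ∃ i, T (EuclideanSpace.single i 1) ≠ 0 := by
    by_contra! h
    refine hT (ContinuousLinearMap.coe_injective
      ((EuclideanSpace.basisFun (Fin n) ℝ).toBasis.ext fun i => ?_))
    simpa using h i
  exact Real.sqrt_pos.2 (Finset.sum_pos' (fun _ _ => sq_nonneg _)
    ⟨i, Finset.mem_univ _, by positivity⟩)

theorem continuous_hsNorm : Continuous (hsNorm (n := n) (q := q)) :=
  Real.continuous_sqrt.comp <| continuous_finsetSum _ fun i _ =>
    (ContinuousLinearMap.apply ℝ _ (EuclideanSpace.single i 1)).continuous.norm.pow 2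

end HilbertSchmidt

section Homogeneous

variable {E F : Type*} [NormedAddCommGroup E] [NormedSpace ℝ E]

theorem apply_smul_of_smul_sphere_eq {ψ : sphere (0 : E) 1 → F} {f : E → F}
    (hf : ∀ (y : sphere (0 : E) 1) (c : ℝ), 0 < c → f (c • (y : E)) = ψ y)
    {c : ℝ} (hc : 0 < c) (x : E) : f (c • x) = f x := by
  rcases eq_or_ne x 0 with rfl | hx
  · rw [smul_zero]
  have hy : ‖x‖⁻¹ • x ∈ sphere (0 : E) 1 := mem_sphere_zero_iff_norm.2 (norm_smul_inv_norm hx)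
  have hx' : x = ‖x‖ • (‖x‖⁻¹ • x) := (smul_inv_smul₀ (norm_ne_zero_iff.2 hx) x).symm
  rw [hx', smul_smul, hf ⟨_, hy⟩ _ (by positivity), hf ⟨_, hy⟩ _ (norm_pos_iff.2 hx)]

theorem fderiv_smul_of_forall_smul_eq [NormedAddCommGroup F] [NormedSpace ℝ F] {f : E → F}
    (hf : ∀ c : ℝ, 0 < c → ∀ x, f (c • x) = f x) {c : ℝ} (hc : 0 < c) (x : E) :
    fderiv ℝ f (c • x) = c⁻¹ • fderiv ℝ f x := by
  let e : E ≃L[ℝ] E := ContinuousLinearEquiv.smulLeft (Units.mk0 c hc.ne')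
  have h := e.comp_right_fderiv (f := f) (x := x)
  rw [show f ∘ e = f from funext (hf c hc)] at h
  rw [h]
  ext v
  simp [e, smul_smul, hc.ne']

end Homogeneous

theorem ContMDiff.contDiffAt_of_smul_sphere_eq {E F : Type*} [NormedAddCommGroup E]
    [InnerProductSpace ℝ E] [NormedAddCommGroup F] [NormedSpace ℝ F] {n : ℕ}
    [Fact (finrank ℝ E = n + 1)] {k : ℕ∞ω} {ψ : sphere (0 : E) 1 → F}
    (hψ : ContMDiff (𝓡 n) 𝓘(ℝ, F) k ψ) {f : E → F}
    (hf : ∀ (y : sphere (0 : E) 1) (c : ℝ), 0 < c → f (c • (y : E)) = ψ y)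
    {x : E} (hx : x ≠ 0) : ContDiffAt ℝ k f x := by
  let U : TopologicalSpace.Opens E := ⟨{0}ᶜ, isOpen_compl_singleton⟩
  have hmem (y : U) : ‖(y : E)‖⁻¹ • (y : E) ∈ sphere (0 : E) 1 :=
    mem_sphere_zero_iff_norm.2 (norm_smul_inv_norm y.2)
  have hnormalize : ContMDiff 𝓘(ℝ, E) 𝓘(ℝ, E) k fun y : U => ‖(y : E)‖⁻¹ • (y : E) := fun y =>
    contMDiffAt_subtype_iff.2 <| ContDiffAt.contMDiffAt (f := fun z : E => ‖z‖⁻¹ • z) <|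
      ((contDiffAt_norm ℝ y.2).inv (norm_ne_zero_iff.2 y.2)).smul contDiffAt_id
  have hfU : (fun y : U => f y) = ψ ∘ Set.codRestrict _ _ hmem := by
    funext y
    have hy : (y : E) ≠ 0 := y.2
    rw [comp_apply, ← hf _ ‖(y : E)‖ (norm_pos_iff.2 hy)]
    simp [smul_smul, hy]
  have hfU_smooth : ContMDiff 𝓘(ℝ, E) 𝓘(ℝ, F) k fun y : U => f y :=
    hfU ▸ hψ.comp (hnormalize.codRestrict_sphere hmem)
  exact (contMDiffAt_subtype_iff.1 (hfU_smooth ⟨x, hx⟩)).contDiffAt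

section Shells

variable {E : Type*} [NormedAddCommGroup E] [NormedSpace ℝ E]

theorem norm_mem_Ioo_of_mem_ball_smul {u x : E} (hu : ‖u‖ = 1) {r δ : ℝ} (hr : 0 < r)
    (hx : x ∈ ball (r • u) (r * δ)) : (1 - δ) * r < ‖x‖ ∧ ‖x‖ < (1 + δ) * r := by
  have hru : ‖r • u‖ = r := by rw [norm_smul, hu, Real.norm_of_nonneg hr.le, mul_one]
  rw [mem_ball, dist_eq_norm] at hx
  constructor <;> linarith [norm_sub_norm_le x (r • u), norm_sub_norm_le (r • u) x,
    norm_sub_rev (r • u) x]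

theorem pairwise_disjoint_ball_smul_inv_two_pow {u : E} (hu : ‖u‖ = 1) {δ : ℝ} (hδ : δ ≤ 1 / 4) :
    Pairwise (Disjoint on
      fun k : ℕ => ball ((2⁻¹ : ℝ) ^ (k + 1) • u) ((2⁻¹ : ℝ) ^ (k + 1) * δ)) := by
  refine (pairwise_disjoint_on _).2 fun j k hjk => Set.disjoint_left.2 fun x hxj hxk => ?_
  have hk : (2⁻¹ : ℝ) ^ (k + 1) ≤ (2⁻¹ : ℝ) ^ (j + 1) / 2 := by
    rw [div_eq_mul_inv, ← pow_succ]
    exact pow_le_pow_of_le_one (by norm_num) (by norm_num) (by omega)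
  have hδ₀ : 0 < δ := pos_of_mul_pos_right (dist_nonneg.trans_lt hxk) (by positivity)
  have hj : (0 : ℝ) < (2⁻¹ : ℝ) ^ (j + 1) := by positivity
  nlinarith [(norm_mem_Ioo_of_mem_ball_smul hu (by positivity) hxj).1,
    (norm_mem_Ioo_of_mem_ball_smul hu (by positivity) hxk).2,
    mul_le_mul_of_nonneg_left hk (by linarith : (0 : ℝ) ≤ 1 + δ)]

end Shells

section Blowup

variable {E : Type*} [NormedAddCommGroup E] [NormedSpace ℝ E] [MeasurableSpace E] [BorelSpace E]
  [FiniteDimensional ℝ E] (μ : Measure E) [μ.IsAddHaarMeasure]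

theorem le_setLIntegral_ball_smul_of_homogeneous {g : E → ℝ}
    (hg : ∀ c : ℝ, 0 < c → ∀ x, g (c • x) = c⁻¹ * g x) {u : E} {ε δ p r : ℝ} (hε : 0 ≤ ε)
    (hgε : ∀ y ∈ ball u δ, ε ≤ g y) (hp : finrank ℝ E ≤ p) (hr₀ : 0 < r) (hr₁ : r ≤ 1) :
    ENNReal.ofReal (ε ^ p) * μ (ball 0 δ) ≤
      ∫⁻ x in ball (r • u) (r * δ), ENNReal.ofReal (g x ^ p) ∂μ := by
  have hp₀ : 0 ≤ p := (Nat.cast_nonneg _).trans hp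
  have hpointwise : ∀ x ∈ ball (r • u) (r * δ), ε / r ≤ g x := fun x hx => by
    have hx' : r⁻¹ • x ∈ ball u δ := by
      rw [mem_ball, dist_eq_norm, ← inv_smul_smul₀ hr₀.ne' u, ← smul_sub, norm_smul,
        Real.norm_eq_abs, abs_of_pos (inv_pos.2 hr₀), inv_mul_lt_iff₀ hr₀, ← dist_eq_norm]
      exact hx
    rw [← smul_inv_smul₀ hr₀.ne' x, hg r hr₀, div_eq_inv_mul]
    exact mul_le_mul_of_nonneg_left (hgε _ hx') (inv_nonneg.2 hr₀.le)
  have hscale : ε ^ p ≤ (ε / r) ^ p * r ^ finrank ℝ E := by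
    rw [Real.div_rpow hε hr₀.le, ← Real.rpow_natCast, div_mul_eq_mul_div,
      le_div_iff₀ (by positivity)]
    exact mul_le_mul_of_nonneg_left (Real.rpow_le_rpow_of_exponent_ge hr₀ hr₁ hp) (by positivity)
  calc ENNReal.ofReal (ε ^ p) * μ (ball 0 δ)
      ≤ ENNReal.ofReal ((ε / r) ^ p) * ENNReal.ofReal (r ^ finrank ℝ E) * μ (ball 0 δ) := by
        rw [← ENNReal.ofReal_mul (by positivity)]
        gcongr
    _ = ∫⁻ _ in ball (r • u) (r * δ), ENNReal.ofReal ((ε / r) ^ p) ∂μ := by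
        rw [setLIntegral_const, Measure.addHaar_ball_mul_of_pos μ _ hr₀, mul_assoc]
    _ ≤ ∫⁻ x in ball (r • u) (r * δ), ENNReal.ofReal (g x ^ p) ∂μ :=
        setLIntegral_mono' measurableSet_ball fun x hx => ENNReal.ofReal_le_ofReal <|
          Real.rpow_le_rpow (by positivity) (hpointwise x hx) hp₀

theorem setLIntegral_ball_rpow_eq_top_of_homogeneous {g : E → ℝ}
    (hg : ∀ c : ℝ, 0 < c → ∀ x, g (c • x) = c⁻¹ * g x) {u : E} (hu : ‖u‖ = 1)
    (hcont : ContinuousAt g u) (hgu : 0 < g u) {p : ℝ} (hp : finrank ℝ E ≤ p) :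
    ∫⁻ x in ball 0 1, ENNReal.ofReal (g x ^ p) ∂μ = ⊤ := by
  obtain ⟨δ₀, hδ₀, hball⟩ :=
    eventually_nhds_iff_ball.1 (hcont.eventually (lt_mem_nhds (half_lt_self hgu)))
  set δ := min δ₀ (1 / 4)
  have hδ : 0 < δ := lt_min hδ₀ (by norm_num)
  have hgε : ∀ y ∈ ball u δ, g u / 2 ≤ g y := fun y hy =>
    (hball y (ball_subset_ball (min_le_left _ _) hy)).le
  set s : ℕ → Set E := fun k => ball ((2⁻¹ : ℝ) ^ (k + 1) • u) ((2⁻¹ : ℝ) ^ (k + 1) * δ)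
  have hs : ∀ k, s k ⊆ ball 0 1 := fun k x hx => by
    have hr : (2⁻¹ : ℝ) ^ (k + 1) ≤ 2⁻¹ := pow_le_of_le_one (by norm_num) (by norm_num) (by omega)
    have := (norm_mem_Ioo_of_mem_ball_smul hu (by positivity) hx).2
    rw [mem_ball_zero_iff]
    nlinarith [min_le_right δ₀ (1 / 4)]
  have hC : ENNReal.ofReal ((g u / 2) ^ p) * μ (ball 0 δ) ≠ 0 :=
    mul_ne_zero (ENNReal.ofReal_pos.2 (by positivity)).ne' (measure_ball_pos μ 0 hδ).ne'
  refine top_le_iff.1 ?_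
  calc ⊤ = ∑' _ : ℕ, ENNReal.ofReal ((g u / 2) ^ p) * μ (ball 0 δ) :=
        (ENNReal.tsum_const_eq_top_of_ne_zero hC).symm
    _ ≤ ∑' k, ∫⁻ x in s k, ENNReal.ofReal (g x ^ p) ∂μ :=
        ENNReal.tsum_le_tsum fun k => le_setLIntegral_ball_smul_of_homogeneous μ hg
          (by positivity) hgε hp (by positivity) (pow_le_one₀ (by norm_num) (by norm_num))
    _ = ∫⁻ x in ⋃ k, s k, ENNReal.ofReal (g x ^ p) ∂μ :=
        (lintegral_iUnion (fun _ => measurableSet_ball)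
          (pairwise_disjoint_ball_smul_inv_two_pow hu (min_le_right _ _)) _).symm
    _ ≤ ∫⁻ x in ball 0 1, ENNReal.ofReal (g x ^ p) ∂μ :=
        lintegral_mono_set (Set.iUnion_subset hs)

end Blowup

theorem fderiv_eq_zero_of_lintegral_hsNorm_rpow_ne_top {n q : ℕ}
    {f : EuclideanSpace ℝ (Fin n) → EuclideanSpace ℝ (Fin q)}
    (hf : ∀ c : ℝ, 0 < c → ∀ x, f (c • x) = f x) (hC1 : ∀ x, x ≠ 0 → ContDiffAt ℝ 1 f x)
    {p : ℝ} (hp : n ≤ p)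
    (hfin : ∫⁻ x in ball 0 1, ENNReal.ofReal (hsNorm (fderiv ℝ f x) ^ p) ≠ ⊤)
    {x : EuclideanSpace ℝ (Fin n)} (hx : x ≠ 0) : fderiv ℝ f x = 0 := by
  by_contra hne
  have hhom (c : ℝ) (hc : 0 < c) (y : EuclideanSpace ℝ (Fin n)) :
      hsNorm (fderiv ℝ f (c • y)) = c⁻¹ * hsNorm (fderiv ℝ f y) := by
    rw [fderiv_smul_of_forall_smul_eq hf hc, hsNorm_smul, abs_of_pos (inv_pos.2 hc)]
  have hu : ‖‖x‖⁻¹ • x‖ = 1 := norm_smul_inv_norm hx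
  have hgu : 0 < hsNorm (fderiv ℝ f (‖x‖⁻¹ • x)) := by
    rw [hhom _ (inv_pos.2 (norm_pos_iff.2 hx)), inv_inv]
    exact mul_pos (norm_pos_iff.2 hx) (hsNorm_pos hne)
  have hcont : ContinuousAt (fun y => hsNorm (fderiv ℝ f y)) (‖x‖⁻¹ • x) :=
    continuous_hsNorm.continuousAt.comp <|
      (hC1 _ (norm_ne_zero_iff.1 (hu.symm ▸ one_ne_zero))).continuousAt_fderiv one_ne_zero
  exact hfin <| setLIntegral_ball_rpow_eq_top_of_homogeneous volume hhom hu hcont hgu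
    (by rwa [finrank_euclideanSpace_fin])

theorem homogeneous_extension_finite_energy_implies_constant_general
    (l q : ℕ) (hl : 1 ≤ l) (p : ℝ) (hp : (l : ℝ) + 1 ≤ p)
    [Fact (Module.finrank ℝ (EuclideanSpace ℝ (Fin (l + 1))) = l + 1)]
    (ψ : (Metric.sphere (0 : EuclideanSpace ℝ (Fin (l + 1))) 1) → EuclideanSpace ℝ (Fin q))
    (hψ : ContMDiff (𝓡 l) 𝓘(ℝ, EuclideanSpace ℝ (Fin q)) 1 ψ)
    (ψbar : EuclideanSpace ℝ (Fin (l + 1)) → EuclideanSpace ℝ (Fin q))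
    (hψbar : ∀ (y : Metric.sphere (0 : EuclideanSpace ℝ (Fin (l + 1))) 1) (c : ℝ), 0 < c →
      ψbar (c • (y : EuclideanSpace ℝ (Fin (l + 1)))) = ψ y)
    (hfin : (∫⁻ x in Metric.ball (0 : EuclideanSpace ℝ (Fin (l + 1))) 1,
        ENNReal.ofReal (hsNorm (fderiv ℝ ψbar x) ^ p)) ≠ ⊤) :
    (∀ y₁ y₂ : Metric.sphere (0 : EuclideanSpace ℝ (Fin (l + 1))) 1, ψ y₁ = ψ y₂) ∧
    ∀ x₁ x₂ : EuclideanSpace ℝ (Fin (l + 1)), x₁ ≠ 0 → x₂ ≠ 0 → ψbar x₁ = ψbar x₂ := by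
  have hC1 (x) (hx : x ≠ 0) : ContDiffAt ℝ 1 ψbar x := hψ.contDiffAt_of_smul_sphere_eq hψbar hx
  have hDψbar (x) (hx : x ≠ 0) : fderiv ℝ ψbar x = 0 :=
    fderiv_eq_zero_of_lintegral_hsNorm_rpow_ne_top
      (fun _ => apply_smul_of_smul_sphere_eq hψbar) hC1 (by exact_mod_cast hp) hfin hx
  have hrank : 1 < Module.rank ℝ (EuclideanSpace ℝ (Fin (l + 1))) := by
    rw [← Module.finrank_eq_rank, finrank_euclideanSpace_fin]
    exact_mod_cast Nat.lt_succ_of_le hl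
  have hconst (x₁ x₂ : EuclideanSpace ℝ (Fin (l + 1))) (h₁ : x₁ ≠ 0) (h₂ : x₂ ≠ 0) :
      ψbar x₁ = ψbar x₂ :=
    isOpen_compl_singleton.is_const_of_fderiv_eq_zero
      (isConnected_compl_singleton_of_one_lt_rank hrank 0).isPreconnected
      (fun x hx => ((hC1 x hx).differentiableAt one_ne_zero).differentiableWithinAt) hDψbar h₁ h₂
  have hψ_eq (y) : ψ y = ψbar y := by simpa using (hψbar y 1 one_pos).symm
  refine ⟨fun y₁ y₂ => ?_, hconst⟩
  rw [hψ_eq, hψ_eq]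
  exact hconst _ _ (ne_zero_of_mem_unit_sphere y₁) (ne_zero_of_mem_unit_sphere y₂)

/-- Let `l ≥ 1`, `q ≥ 1`, `p ≥ l + 1`, let `ψ : 𝕊^l → ℝ^q` be `C¹` and
let `ψ̄(x) = ψ(x/‖x‖)` be its `0`-homogeneous extension. If the `p`-energy
`∫_{B_1(0)} ‖Dψ̄‖^p` is finite, then `ψ` (and hence `ψ̄`) is constant. -/
theorem homogeneous_extension_finite_energy_implies_constant
    (l q : ℕ) (hl : 1 ≤ l) (hq : 1 ≤ q) (p : ℝ) (hp : (l : ℝ) + 1 ≤ p)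
    [Fact (Module.finrank ℝ (EuclideanSpace ℝ (Fin (l + 1))) = l + 1)]
    (ψ : (Metric.sphere (0 : EuclideanSpace ℝ (Fin (l + 1))) 1) → EuclideanSpace ℝ (Fin q))
    (hψ : ContMDiff (𝓡 l) 𝓘(ℝ, EuclideanSpace ℝ (Fin q)) 1 ψ)
    (ψbar : EuclideanSpace ℝ (Fin (l + 1)) → EuclideanSpace ℝ (Fin q))
    (hψbar : ∀ (y : Metric.sphere (0 : EuclideanSpace ℝ (Fin (l + 1))) 1) (c : ℝ), 0 < c →
      ψbar (c • (y : EuclideanSpace ℝ (Fin (l + 1)))) = ψ y)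
    (hfin : (∫⁻ x in Metric.ball (0 : EuclideanSpace ℝ (Fin (l + 1))) 1,
        ENNReal.ofReal (hsNorm (fderiv ℝ ψbar x) ^ p)) ≠ ⊤) :
    (∀ y₁ y₂ : Metric.sphere (0 : EuclideanSpace ℝ (Fin (l + 1))) 1, ψ y₁ = ψ y₂) ∧
    ∀ x₁ x₂ : EuclideanSpace ℝ (Fin (l + 1)), x₁ ≠ 0 → x₂ ≠ 0 → ψbar x₁ = ψbar x₂ :=
  homogeneous_extension_finite_energy_implies_constant_general l q hl p hp ψ hψ ψbar hψbar hfin
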